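/- arXiv:2207.03696 — 4 statements merged into one kernel-verified Lean document; each statement's English description precedes it below -/
import Mathlib

section
/- Let f, g ∈ L¹(ℝ) and define the A-convolution (f ⋆_A g)(x) = (1/√|b|) ∫_ℝ f(s) T_s^A g(x) ds, where T_s^A g(x) = e^{-2πi(a/b)s(x-s)} g(x-s). Then C_{a/b}(f ⋆_A g) = (1/√|b|) (C_{a/b} f) ⋆ (C_{a/b} g), where ⋆ is ordinary convolution and C_{a/b} h(t) = e^{πi(a/b)t²} h(t). -/
open MeasureTheory Complex

theorem chirp_of_A_convolution (a b : ℝ) (hb : b ≠ 0) (f g : ℝ → ℂ)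
    (hf : Integrable f) (hg : Integrable g) (x : ℝ) :
    Complex.exp (Real.pi * Complex.I * (a / b) * x ^ 2) *
        ((1 / Real.sqrt |b|) *
          ∫ s : ℝ, f s *
            (Complex.exp (-2 * Real.pi * Complex.I * (a / b) * s * (x - s)) * g (x - s))) =
      (1 / Real.sqrt |b|) *
        ∫ s : ℝ, (Complex.exp (Real.pi * Complex.I * (a / b) * s ^ 2) * f s) *
          (Complex.exp (Real.pi * Complex.I * (a / b) * (x - s) ^ 2) * g (x - s)) := by
  rw [mul_left_comm]
  congr 1
  rw [← integral_const_mul]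
  refine integral_congr_ae (Filter.Eventually.of_forall fun s => ?_)
  have h : Complex.exp (Real.pi * Complex.I * (a / b) * x ^ 2) *
      Complex.exp (-2 * Real.pi * Complex.I * (a / b) * s * (x - s)) =
      Complex.exp (Real.pi * Complex.I * (a / b) * s ^ 2) *
      Complex.exp (Real.pi * Complex.I * (a / b) * (x - s) ^ 2) := by
    rw [← Complex.exp_add, ← Complex.exp_add]
    congr 1
    ring
  calc Complex.exp (Real.pi * Complex.I * (a / b) * x ^ 2) *
      (f s * (Complex.exp (-2 * Real.pi * Complex.I * (a / b) * s * (x - s)) * g (x - s)))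
      = (Complex.exp (Real.pi * Complex.I * (a / b) * x ^ 2) *
        Complex.exp (-2 * Real.pi * Complex.I * (a / b) * s * (x - s))) * (f s * g (x - s)) := by ring
    _ = _ := by rw [h]; ring
end

section
/- The special affine Fourier transform 𝓕_A is a bijection from the Schwartz space S(ℝ) onto itself. -/
open MeasureTheory Complex

noncomputable def SAFT (a b d p q : ℝ) (f : ℝ → ℂ) (ω : ℝ) : ℂ :=
  (1 / Real.sqrt |b|) *
    ∫ t : ℝ, f t *
      Complex.exp ((Real.pi * Complex.I / b) *
        (a * t ^ 2 + 2 * p * t - 2 * ω * t + 2 * (b * q - d * p) * ω + d * ω ^ 2))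

/-!
Splitting the exponent of the kernel factors the special affine Fourier transform as
`f ↦ |b|^(-1/2) · φ_out · (𝓕(φ_in · f))(· / b)`, where `φ_in(t) = exp(πi(at² + 2pt)/b)` and
`φ_out(ω) = exp(πi(dω² + 2(bq - dp)ω)/b)` are chirps. Each factor is an automorphism of `𝓢(ℝ, ℂ)`:
the Fourier transform by Fourier inversion, the dilation because `b ≠ 0`, and multiplication by
`exp(iP)` for a real polynomial `P` because every derivative of `exp(iP)` is a polynomial times
`exp(iP)`, hence of polynomial growth, with inverse multiplication by `exp(-iP)`.
-/

open Polynomial SchwartzMap Real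

noncomputable section

lemma Polynomial.hasTemperateGrowth_eval_ofReal (Q : ℂ[X]) :
    Function.HasTemperateGrowth fun x : ℝ ↦ Q.eval (x : ℂ) := by
  induction Q using Polynomial.induction_on' with
  | add P Q hP hQ => simp only [eval_add]; exact hP.add hQ
  | monomial n c => simp only [eval_monomial]; fun_prop

def chirp (P : ℝ[X]) (t : ℝ) : ℂ := cexp (I * P.eval t)

lemma norm_chirp (P : ℝ[X]) (t : ℝ) : ‖chirp P t‖ = 1 := by
  simp [chirp, Complex.norm_exp]

lemma chirp_neg_mul_chirp (P : ℝ[X]) (t : ℝ) : chirp (-P) t * chirp P t = 1 := by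
  simp [chirp, ← Complex.exp_add]

lemma chirp_mul_chirp_neg (P : ℝ[X]) (t : ℝ) : chirp P t * chirp (-P) t = 1 := by
  simp [chirp, ← Complex.exp_add]

lemma hasDerivAt_chirp (P : ℝ[X]) (t : ℝ) :
    HasDerivAt (chirp P) (I * P.derivative.eval t * chirp P t) t := by
  unfold chirp
  convert (((P.hasDerivAt t).ofReal_comp).const_mul I).cexp using 1
  ring

lemma exists_iteratedDeriv_chirp_eq (P : ℝ[X]) (n : ℕ) :
    ∃ Q : ℂ[X], iteratedDeriv n (chirp P) = fun t : ℝ ↦ Q.eval (t : ℂ) * chirp P t := by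
  induction n with
  | zero => exact ⟨1, by simp⟩
  | succ n ih =>
    obtain ⟨Q, hQ⟩ := ih
    refine ⟨Q.derivative + Q * C I * P.derivative.map (algebraMap ℝ ℂ), funext fun t ↦ ?_⟩
    rw [iteratedDeriv_succ, hQ]
    have hQt : HasDerivAt (fun s : ℝ ↦ Q.eval (s : ℂ)) (Q.derivative.eval (t : ℂ)) t :=
      (Q.hasDerivAt (t : ℂ)).comp_ofReal
    rw [(hQt.fun_mul (hasDerivAt_chirp P t)).deriv]
    simp only [eval_add, eval_mul, eval_C, eval_map, Complex.coe_algebraMap.symm, eval₂_at_apply]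
    ring

lemma hasTemperateGrowth_chirp (P : ℝ[X]) : Function.HasTemperateGrowth (chirp P) := by
  have hP : ContDiff ℝ (⊤ : ℕ∞) fun t ↦ P.eval t := by
    simpa using P.contDiff_aeval (𝕜 := ℝ) (⊤ : ℕ∞)
  refine ⟨(contDiff_const.mul (ofRealCLM.contDiff.comp hP)).cexp, fun n ↦ ?_⟩
  obtain ⟨Q, hQ⟩ := exists_iteratedDeriv_chirp_eq P n
  obtain ⟨k, K, hK⟩ := Q.hasTemperateGrowth_eval_ofReal.2 0
  refine ⟨k, K, fun x ↦ ?_⟩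
  simpa [norm_iteratedFDeriv_eq_norm_iteratedDeriv, hQ, norm_chirp] using hK x

namespace SchwartzMap

variable (𝕜 : Type*) {D E F : Type*} [RCLike 𝕜]
  [NormedAddCommGroup D] [NormedSpace ℝ D] [NormedAddCommGroup E] [NormedSpace ℝ E]
  [NormedAddCommGroup F] [NormedSpace ℝ F] [NormedSpace 𝕜 F]

def compCLEOfContinuousLinearEquiv (g : D ≃L[ℝ] E) : 𝓢(E, F) ≃L[𝕜] 𝓢(D, F) :=
  .equivOfInverse (compCLMOfContinuousLinearEquiv 𝕜 g) (compCLMOfContinuousLinearEquiv 𝕜 g.symm)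
    (fun f ↦ by ext x; simp) (fun f ↦ by ext x; simp)

@[simp]
lemma compCLEOfContinuousLinearEquiv_apply (g : D ≃L[ℝ] E) (f : 𝓢(E, F)) :
    compCLEOfContinuousLinearEquiv 𝕜 g f = f ∘ g := rfl

end SchwartzMap

def mulChirpCLE (P : ℝ[X]) : 𝓢(ℝ, ℂ) ≃L[ℂ] 𝓢(ℝ, ℂ) :=
  .equivOfInverse (smulLeftCLM ℂ (chirp P)) (smulLeftCLM ℂ (chirp (-P)))
    (fun f ↦ by
      ext t
      simp [smulLeftCLM_apply_apply (hasTemperateGrowth_chirp _), ← mul_assoc, chirp_neg_mul_chirp])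
    (fun f ↦ by
      ext t
      simp [smulLeftCLM_apply_apply (hasTemperateGrowth_chirp _), ← mul_assoc, chirp_mul_chirp_neg])

lemma mulChirpCLE_apply (P : ℝ[X]) (f : 𝓢(ℝ, ℂ)) (t : ℝ) :
    mulChirpCLE P f t = chirp P t * f t :=
  smulLeftCLM_apply_apply (hasTemperateGrowth_chirp P) f t

def saftChirpIn (a b p : ℝ) : ℝ[X] := C (π * a / b) * X ^ 2 + C (2 * π * p / b) * X

def saftChirpOut (b d p q : ℝ) : ℝ[X] := C (π * d / b) * X ^ 2 + C (2 * π * (b * q - d * p) / b) * X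

def saftCLE (a b d p q : ℝ) (hb : b ≠ 0) : 𝓢(ℝ, ℂ) ≃L[ℂ] 𝓢(ℝ, ℂ) :=
  (mulChirpCLE (saftChirpIn a b p)).trans <|
    (FourierTransform.fourierCLE ℂ 𝓢(ℝ, ℂ)).trans <|
    (compCLEOfContinuousLinearEquiv ℂ (.smulLeft (Units.mk0 b⁻¹ (inv_ne_zero hb)))).trans <|
    (mulChirpCLE (saftChirpOut b d p q)).trans <|
    .smulLeft (Units.mk0 (1 / Real.sqrt |b| : ℂ) (by simpa using hb))

lemma saft_kernel_eq (a b d p q t ω : ℝ) :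
    cexp (π * I / b * (a * t ^ 2 + 2 * p * t - 2 * ω * t + 2 * (b * q - d * p) * ω + d * ω ^ 2)) =
      chirp (saftChirpOut b d p q) ω *
        (cexp (↑(-2 * π * t * (b⁻¹ * ω)) * I) * (chirp (saftChirpIn a b p) t)) := by
  simp only [chirp, saftChirpIn, saftChirpOut, ← Complex.exp_add]
  congr 1
  simp only [eval_add, eval_mul, eval_C, eval_pow, eval_X]
  push_cast
  ring

lemma SAFT_eq_saftCLE (a b d p q : ℝ) (hb : b ≠ 0) (f : 𝓢(ℝ, ℂ)) :
    SAFT a b d p q f = saftCLE a b d p q hb f := by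
  ext ω
  simp only [SAFT, saftCLE, ContinuousLinearEquiv.trans_apply,
    ContinuousLinearEquiv.smulLeft_apply_apply, Units.smul_mk0, smul_apply,
    mulChirpCLE_apply, compCLEOfContinuousLinearEquiv_apply, Function.comp_apply,
    FourierTransform.fourierCLE_apply, SchwartzMap.fourier_coe,
    Real.fourier_real_eq_integral_exp_smul, smul_eq_mul, saft_kernel_eq]
  simp_rw [← integral_const_mul]
  congr with t
  ring

end

theorem SAFT_bijective_schwartz_general (a b d p q : ℝ) (hb : b ≠ 0) :
    (∀ f : SchwartzMap ℝ ℂ, ∃ g : SchwartzMap ℝ ℂ, SAFT a b d p q (⇑f) = ⇑g) ∧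
    (∀ g : SchwartzMap ℝ ℂ, ∃! f : SchwartzMap ℝ ℂ, SAFT a b d p q (⇑f) = ⇑g) := by
  simp_rw [SAFT_eq_saftCLE a b d p q hb, DFunLike.coe_fn_eq]
  exact ⟨fun f ↦ ⟨_, rfl⟩, (saftCLE a b d p q hb).bijective.existsUnique⟩

/-- The SAFT maps the Schwartz space into itself, and is a bijection of the Schwartz space
onto itself. -/
theorem SAFT_bijective_schwartz (a b c d p q : ℝ) (hb : b ≠ 0) (hA : a * d - b * c = 1) :
    (∀ f : SchwartzMap ℝ ℂ, ∃ g : SchwartzMap ℝ ℂ, SAFT a b d p q (⇑f) = ⇑g) ∧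
    (∀ g : SchwartzMap ℝ ℂ, ∃! f : SchwartzMap ℝ ℂ, SAFT a b d p q (⇑f) = ⇑g) :=
  SAFT_bijective_schwartz_general a b d p q hb
end

section
/- Fundamental relation for SAFT: for f, g ∈ S(ℝ), ∫_ℝ η̄_A(ω) 𝓕_A(ρ̄_A f)(ω) g(ω) dω = ∫_ℝ η̄_A(ω) f(ω) 𝓕_A(ρ̄_A g)(ω) dω, where ρ̄_A, η̄_A denote complex conjugates of ρ_A(t) = e^{(πi/b)(at²+2pt)} and η_A(ω) = e^{(πi/b)(dω²+2(bq−dp)ω)}. -/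
open MeasureTheory Complex

noncomputable def etaA (b d p q : ℝ) (ω : ℝ) : ℂ :=
  Complex.exp ((Real.pi * Complex.I / b) * (d * ω ^ 2 + 2 * (b * q - d * p) * ω))

noncomputable def rhoA (a b p : ℝ) (t : ℝ) : ℂ :=
  Complex.exp ((Real.pi * Complex.I / b) * (a * t ^ 2 + 2 * p * t))

/-!
The chirps cancel: `conj (η_A ω) * 𝓕_A (conj ρ_A * f) ω = |b|^(-1/2) * 𝓕 f (ω / b)`, where `𝓕` is
the ordinary Fourier transform. The relation is then the multiplication formula
`∫ 𝓕 f (ω / b) * g ω = ∫ f t * 𝓕 g (t / b)`, i.e. Fubini for the kernel `e^(-2πiωt/b)`, which is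
symmetric in `ω` and `t`.
-/

open scoped FourierTransform

theorem Real.integral_fourier_div_mul_eq (b : ℝ) {f g : ℝ → ℂ} (hf : Integrable f)
    (hg : Integrable g) :
    ∫ ω, 𝓕 f (ω / b) * g ω = ∫ t, f t * 𝓕 g (t / b) := by
  set L : ℝ →ₗ[ℝ] ℝ →ₗ[ℝ] ℝ := b⁻¹ • LinearMap.mul ℝ ℝ
  have hL : ∀ h : ℝ → ℂ, VectorFourier.fourierIntegral 𝐞 volume L h = fun ω ↦ 𝓕 h (ω / b) := by
    intro h
    ext ω
    simp only [VectorFourier.fourierIntegral, Real.fourier_real_eq, L, LinearMap.smul_apply,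
      LinearMap.mul_apply', smul_eq_mul]
    congr with v
    ring_nf
  have hflip : L.flip = L := by
    ext; simp [L]
  have := VectorFourier.integral_fourierIntegral_smul_eq_flip (L := L) (μ := volume) (ν := volume)
    Real.continuous_fourierChar (by simp only [L]; fun_prop) hf hg
  simpa only [hflip, hL, smul_eq_mul] using this

theorem conj_etaA_mul_SAFT_conj_rhoA_mul_eq_fourier (a b d p q : ℝ) (f : ℝ → ℂ) (ω : ℝ) :
    starRingEnd ℂ (etaA b d p q ω) * SAFT a b d p q (fun t ↦ starRingEnd ℂ (rhoA a b p t) * f t) ω =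
      (Real.sqrt |b| : ℂ)⁻¹ * 𝓕 f (ω / b) := by
  simp only [SAFT, etaA, rhoA, Real.fourier_real_eq_integral_exp_smul, ← Complex.exp_conj,
    smul_eq_mul, one_div, mul_right_comm (cexp _) (f _), ← Complex.exp_add]
  rw [mul_left_comm, ← integral_const_mul]
  simp only [← mul_assoc, ← Complex.exp_add]
  congr with t
  simp only [map_mul, map_add, map_div₀, map_pow, map_ofNat, map_sub, Complex.conj_I,
    Complex.conj_ofReal]
  push_cast
  ring_nf

theorem SAFT_fundamental_relation_general (a b d p q : ℝ)
    (f g : SchwartzMap ℝ ℂ) :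
    (∫ ω : ℝ, (starRingEnd ℂ) (etaA b d p q ω) *
        SAFT a b d p q (fun t => (starRingEnd ℂ) (rhoA a b p t) * f t) ω * g ω) =
      ∫ ω : ℝ, (starRingEnd ℂ) (etaA b d p q ω) * f ω *
        SAFT a b d p q (fun t => (starRingEnd ℂ) (rhoA a b p t) * g t) ω := by
  have key := conj_etaA_mul_SAFT_conj_rhoA_mul_eq_fourier a b d p q
  calc _ = ∫ ω, (Real.sqrt |b| : ℂ)⁻¹ * (𝓕 (⇑f) (ω / b) * g ω) := by simp_rw [key, mul_assoc]
    _ = ∫ ω, (Real.sqrt |b| : ℂ)⁻¹ * (f ω * 𝓕 (⇑g) (ω / b)) := by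
      rw [integral_const_mul, integral_const_mul,
        Real.integral_fourier_div_mul_eq b f.integrable g.integrable]
    _ = _ := by
      congr with ω
      rw [mul_right_comm, key]
      ring

theorem SAFT_fundamental_relation (a b c d p q : ℝ) (hb : b ≠ 0) (hA : a * d - b * c = 1)
    (f g : SchwartzMap ℝ ℂ) :
    (∫ ω : ℝ, (starRingEnd ℂ) (etaA b d p q ω) *
        SAFT a b d p q (fun t => (starRingEnd ℂ) (rhoA a b p t) * f t) ω * g ω) =
      ∫ ω : ℝ, (starRingEnd ℂ) (etaA b d p q ω) * f ω *
        SAFT a b d p q (fun t => (starRingEnd ℂ) (rhoA a b p t) * g t) ω :=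
  SAFT_fundamental_relation_general a b d p q f g
end

section
/- Let B be the differential operator Bf(t) = f'(t) + (2πia/b) t f(t). For f ∈ S(ℝ), B(𝓕_A f)(ω) = (2πi/b)(aω + dω + Ω) 𝓕_A(f)(ω) − (2πi/b) 𝓕_A(t f(t))(ω), where Ω = bq − dp. -/
open MeasureTheory Complex

/-!
Splitting the phase, `SAFT f ω` is `|b|^(-1/2)` times the chirp `exp (iπ (2Ωω + dω²) / b)`
times the ordinary Fourier transform, at `ω / b`, of the prechirped signal
`f t * exp (iπ (a t² + 2pt) / b)`. Differentiating this product, the chirp contributes the factor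
`(2πi/b) (dω + Ω)`, while the derivative of the Fourier transform is the transform of `-2πi t`
times the signal, which is `-(2πi/b) SAFT (t f)` once the chain-rule factor `1/b` is included.
The term `(2πia/b) ω SAFT f` of `B` then only adds `aω` to the first factor.
-/

open scoped FourierTransform

namespace SAFT

noncomputable def prechirp (a b p : ℝ) (f : ℝ → ℂ) (t : ℝ) : ℂ :=
  f t * exp (Real.pi * I / b * (a * t ^ 2 + 2 * p * t))

noncomputable def postchirp (b d p q ω : ℝ) : ℂ :=
  exp (Real.pi * I / b * (2 * (b * q - d * p) * ω + d * ω ^ 2))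

theorem eq_postchirp_mul_fourier_prechirp (a b d p q : ℝ) (f : ℝ → ℂ) (ω : ℝ) :
    SAFT a b d p q f ω =
      1 / Real.sqrt |b| * postchirp b d p q ω * 𝓕 (prechirp a b p f) (ω / b) := by
  rw [Real.fourier_real_eq_integral_exp_smul, SAFT, mul_assoc _ (postchirp b d p q ω),
    ← integral_const_mul (postchirp b d p q ω)]
  congr 1
  refine integral_congr_ae (Filter.Eventually.of_forall fun t => ?_)
  simp only [postchirp, prechirp, smul_eq_mul]
  rw [mul_left_comm (exp _) (f t), mul_left_comm (exp _) (f t), ← exp_add, ← exp_add]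
  congr 2
  push_cast
  ring

theorem hasDerivAt_postchirp (b d p q ω : ℝ) :
    HasDerivAt (postchirp b d p q)
      (postchirp b d p q ω * (2 * Real.pi * I / b * (d * ω + (b * q - d * p)))) ω := by
  have hphase : HasDerivAt (fun x : ℝ => Real.pi * I / b * (2 * (b * q - d * p) * x + d * x ^ 2))
      (2 * Real.pi * I / b * (d * ω + (b * q - d * p))) ω := by
    refine ((((hasDerivAt_id (ω : ℂ)).const_mul (2 * ((b : ℂ) * q - d * p))).add
      ((hasDerivAt_pow 2 (ω : ℂ)).const_mul (d : ℂ))).const_mul _).comp_ofReal.congr_deriv ?_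
    simp only [mul_one, Nat.cast_ofNat, Nat.add_one_sub_one, pow_one]
    ring
  exact hphase.cexp

section

variable {a b p : ℝ}

theorem norm_prechirp (f : ℝ → ℂ) (t : ℝ) : ‖prechirp a b p f t‖ = ‖f t‖ := by
  rw [prechirp, norm_mul, show Real.pi * I / b * (a * t ^ 2 + 2 * p * t) =
    ((Real.pi / b * (a * t ^ 2 + 2 * p * t) : ℝ) : ℂ) * I by push_cast; ring,
    norm_exp_ofReal_mul_I, mul_one]

theorem integrable_prechirp {f : ℝ → ℂ} (hf : Integrable f) :
    Integrable (prechirp a b p f) :=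
  hf.norm.mono' (hf.aestronglyMeasurable.mul (by fun_prop : Continuous _).aestronglyMeasurable)
    (ae_of_all _ fun t => (norm_prechirp f t).le)

theorem prechirp_ofReal_mul_eq_smul (f : ℝ → ℂ) :
    prechirp a b p (fun t => t * f t) = fun t => (t : ℝ) • prechirp a b p f t := by
  ext t
  simp only [prechirp, real_smul, mul_assoc]

theorem fourier_smul_prechirp (f : ℝ → ℂ) (ξ : ℝ) :
    𝓕 (fun t : ℝ => (-2 * Real.pi * I * t) • prechirp a b p f t) ξ =
      -2 * Real.pi * I * 𝓕 (prechirp a b p fun t => t * f t) ξ := by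
  simp only [Real.fourier_real_eq_integral_exp_smul, prechirp_ofReal_mul_eq_smul,
    ← integral_const_mul, smul_eq_mul, real_smul]
  congr 1 with t
  ring

end

theorem hasDerivAt (a b d p q : ℝ) {f : ℝ → ℂ} (hf : Integrable f)
    (htf : Integrable fun t : ℝ => (t : ℂ) * f t) (ω : ℝ) :
    HasDerivAt (SAFT a b d p q f)
      (2 * Real.pi * I / b * (d * ω + (b * q - d * p)) * SAFT a b d p q f ω -
        2 * Real.pi * I / b * SAFT a b d p q (fun t => t * f t) ω) ω := by
  have htg : Integrable fun t : ℝ => t • prechirp a b p f t := by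
    rw [← prechirp_ofReal_mul_eq_smul]
    exact integrable_prechirp htf
  have hfourier : HasDerivAt (fun x : ℝ => 𝓕 (prechirp a b p f) (x / b))
      (b⁻¹ * (-2 * Real.pi * I * 𝓕 (prechirp a b p fun t => t * f t) (ω / b))) ω := by
    have h := (Real.hasDerivAt_fourier (integrable_prechirp hf) htg (ω / b)).scomp ω
      ((hasDerivAt_id ω).div_const b)
    rw [fourier_smul_prechirp] at h
    simpa [Function.comp_def, real_smul] using h
  rw [show SAFT a b d p q f = fun x =>
      1 / Real.sqrt |b| * postchirp b d p q x * 𝓕 (prechirp a b p f) (x / b) from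
    funext (eq_postchirp_mul_fourier_prechirp a b d p q f), eq_postchirp_mul_fourier_prechirp]
  refine (((hasDerivAt_postchirp b d p q ω).const_mul _).mul hfourier).congr_deriv ?_
  push_cast
  ring

end SAFT

theorem B_of_SAFT_general (a b d p q : ℝ)
    (f : SchwartzMap ℝ ℂ) (ω : ℝ) :
    deriv (SAFT a b d p q (⇑f)) ω +
        (2 * Real.pi * Complex.I * a / b) * ω * SAFT a b d p q (⇑f) ω =
      (2 * Real.pi * Complex.I / b) * (a * ω + d * ω + (b * q - d * p)) *
          SAFT a b d p q (⇑f) ω -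
        (2 * Real.pi * Complex.I / b) * SAFT a b d p q (fun t => t * f t) ω := by
  have htf : Integrable fun t : ℝ => (t : ℂ) * f t :=
    (f.integrable_pow_mul volume 1).mono' (by fun_prop) (ae_of_all _ fun t => by simp)
  rw [(SAFT.hasDerivAt a b d p q f.integrable htf ω).deriv]
  ring

theorem B_of_SAFT (a b c d p q : ℝ) (hb : b ≠ 0) (hA : a * d - b * c = 1)
    (f : SchwartzMap ℝ ℂ) (ω : ℝ) :
    deriv (SAFT a b d p q (⇑f)) ω +
        (2 * Real.pi * Complex.I * a / b) * ω * SAFT a b d p q (⇑f) ω =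
      (2 * Real.pi * Complex.I / b) * (a * ω + d * ω + (b * q - d * p)) *
          SAFT a b d p q (⇑f) ω -
        (2 * Real.pi * Complex.I / b) * SAFT a b d p q (fun t => t * f t) ω :=
  B_of_SAFT_general a b d p q f ω
end
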